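/- arXiv:1810.08292 — 5 statements merged into one kernel-verified Lean document; each statement's English description precedes it below -/
import Mathlib

section
/- Let W and Ŵ be symmetric d×d real matrices with nonnegative entries whose respective row sums Dᵢ = Σⱼ Wᵢⱼ and D̂ᵢ = Σⱼ Ŵᵢⱼ are all positive. Let L = I − D^{-1/2} W D^{-1/2} and L̂ = I − D̂^{-1/2} Ŵ D̂^{-1/2} be the corresponding normalized graph Laplacians, and set m = maxᵢ |Dᵢ − D̂ᵢ| / minᵢ Dᵢ. Then ‖L̂ − L‖_op ≤ m·(2 + m) + ‖Ŵ − W‖_op / minᵢ Dᵢ. -/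
open Matrix

/-- Degree (row sum) of a weight matrix. -/
noncomputable def deg {d : ℕ} (W : Matrix (Fin d) (Fin d) ℝ) (i : Fin d) : ℝ :=
  ∑ j, W i j

/-- The diagonal matrix `D^{-1/2}` with entries `1/√Dᵢ`. -/
noncomputable def invSqrtDeg {d : ℕ} (W : Matrix (Fin d) (Fin d) ℝ) :
    Matrix (Fin d) (Fin d) ℝ :=
  Matrix.diagonal fun i => (Real.sqrt (deg W i))⁻¹

/-- The normalized graph Laplacian `L = I − D^{-1/2} W D^{-1/2}`. -/
noncomputable def normLap {d : ℕ} (W : Matrix (Fin d) (Fin d) ℝ) :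
    Matrix (Fin d) (Fin d) ℝ :=
  1 - invSqrtDeg W * W * invSqrtDeg W

/-- Spectral (operator) norm of a real matrix. -/
noncomputable def opNorm {m n : ℕ} (M : Matrix (Fin m) (Fin n) ℝ) : ℝ :=
  ‖LinearMap.toContinuousLinearMap (Matrix.toEuclideanLin M)‖

/-!
Write `S = D^{-1/2}`, `Ŝ = D̂^{-1/2}`, `Â = Ŝ Ŵ Ŝ` and `G = diag(√(D̂ᵢ / Dᵢ))`, so that
`S = G Ŝ = Ŝ G` and hence
`L̂ - L = S W S - Â = S (W - Ŵ) S + (G - 1) Â (G - 1) + (G - 1) Â + Â (G - 1)`.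
Now `‖S‖² ≤ 1 / minᵢ Dᵢ`, `‖G - 1‖ ≤ m` because `|√u - 1| ≤ |u - 1|`, and `‖Â‖ ≤ 1`:
Cauchy–Schwarz with the probability weights `Ŵᵢⱼ / D̂ᵢ` bounds `(Â x)ᵢ²` by `∑ⱼ Ŵᵢⱼ xⱼ² / D̂ⱼ`,
and summing over `i` uses that, `Ŵ` being symmetric, its column sums are the `D̂ⱼ`.
-/

open scoped Matrix.Norms.L2Operator

lemma abs_sqrt_sub_one_le_abs_sub_one {u : ℝ} (hu : 0 ≤ u) : |√u - 1| ≤ |u - 1| := by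
  have hfactor : u - 1 = (√u - 1) * (√u + 1) := by
    linear_combination -Real.sq_sqrt hu
  rw [hfactor, abs_mul, abs_of_nonneg (by positivity : 0 ≤ √u + 1)]
  exact le_mul_of_one_le_right (abs_nonneg _) (by linarith [Real.sqrt_nonneg u])

lemma abs_sqrt_div_sqrt_sub_one_le {a b : ℝ} (ha : 0 < a) (hb : 0 ≤ b) :
    |√b / √a - 1| ≤ |b - a| / a := by
  rw [← Real.sqrt_div' _ ha.le]
  calc |√(b / a) - 1| ≤ |b / a - 1| := abs_sqrt_sub_one_le_abs_sub_one (by positivity)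
    _ = |b - a| / a := by rw [div_sub_one ha.ne', abs_div, abs_of_pos ha]

namespace Matrix

lemma l2_opNorm_le_of_sum_sq_mulVec_le {m n : Type*} [Fintype m] [Fintype n] [DecidableEq n]
    {A : Matrix m n ℝ} {c : ℝ} (hc : 0 ≤ c)
    (h : ∀ x : n → ℝ, ∑ i, (A *ᵥ x) i ^ 2 ≤ c ^ 2 * ∑ j, x j ^ 2) : ‖A‖ ≤ c := by
  rw [l2_opNorm_def]
  refine ContinuousLinearMap.opNorm_le_bound _ hc fun x => ?_
  rw [← sq_le_sq₀ (norm_nonneg _) (by positivity), mul_pow, EuclideanSpace.norm_sq_eq,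
    EuclideanSpace.norm_sq_eq]
  simpa using h x

lemma l2_opNorm_diagonal_le {n : Type*} [Fintype n] [DecidableEq n] {v : n → ℝ} {c : ℝ}
    (hc : 0 ≤ c) (h : ∀ i, |v i| ≤ c) : ‖diagonal v‖ ≤ c := by
  rw [l2_opNorm_diagonal]
  exact (pi_norm_le_iff_of_nonneg hc).2 h

end Matrix

lemma norm_one_sub_sandwich_sub_le {R : Type*} [NormedRing R] {S Sh G W Wh : R} {s m : ℝ}
    (hGS : G * Sh = S) (hSG : Sh * G = S) (hS : ‖S‖ ≤ s) (hA : ‖Sh * Wh * Sh‖ ≤ 1)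
    (hG : ‖G - 1‖ ≤ m) :
    ‖(1 - Sh * Wh * Sh) - (1 - S * W * S)‖ ≤ m * (2 + m) + s ^ 2 * ‖Wh - W‖ := by
  set A := Sh * Wh * Sh
  have hconj : S * Wh * S = G * A * G :=
    calc S * Wh * S = G * Sh * Wh * (Sh * G) := by rw [hGS, hSG]
      _ = G * A * G := by simp only [A, mul_assoc]
  have hsplit : (1 - A) - (1 - S * W * S)
      = S * (W - Wh) * S + ((G - 1) * A * (G - 1) + ((G - 1) * A + A * (G - 1))) := by
    rw [mul_sub, sub_mul, hconj]
    noncomm_ring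
  have hm : 0 ≤ m := (norm_nonneg _).trans hG
  have hs : 0 ≤ s := (norm_nonneg _).trans hS
  rw [hsplit]
  calc _ ≤ ‖S‖ * ‖W - Wh‖ * ‖S‖
          + (‖G - 1‖ * ‖A‖ * ‖G - 1‖ + (‖G - 1‖ * ‖A‖ + ‖A‖ * ‖G - 1‖)) :=
        (norm_add_le _ _).trans <| add_le_add (norm_mul₃_le ..) <|
          (norm_add_le _ _).trans <| add_le_add (norm_mul₃_le ..) <|
            (norm_add_le _ _).trans <| add_le_add (norm_mul_le ..) (norm_mul_le ..)
    _ ≤ s * ‖W - Wh‖ * s + (m * 1 * m + (m * 1 + 1 * m)) := by gcongr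
    _ = m * (2 + m) + s ^ 2 * ‖Wh - W‖ := by rw [norm_sub_rev]; ring

section NormalizedAdjacency

variable {d : ℕ} {W : Matrix (Fin d) (Fin d) ℝ}

lemma invSqrtDeg_mul_mul_invSqrtDeg_apply (i j : Fin d) :
    (invSqrtDeg W * W * invSqrtDeg W) i j = (√(deg W i))⁻¹ * W i j * (√(deg W j))⁻¹ := by
  simp [invSqrtDeg, mul_diagonal, diagonal_mul]

lemma sq_invSqrtDeg_mul_mul_invSqrtDeg_mulVec_le (hW : ∀ i j, 0 ≤ W i j)
    (hdW : ∀ i, 0 < deg W i) (x : Fin d → ℝ) (i : Fin d) :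
    ((invSqrtDeg W * W * invSqrtDeg W) *ᵥ x) i ^ 2 ≤ ∑ j, W i j * (x j ^ 2 / deg W j) := by
  have hrow : ∑ j, W i j / deg W i = 1 := by
    rw [← Finset.sum_div]
    exact div_self (hdW i).ne'
  have hcs := Finset.sum_sq_le_sum_mul_sum_of_sq_le_mul Finset.univ
    (r := fun j => (√(deg W i))⁻¹ * W i j * (√(deg W j))⁻¹ * x j)
    (fun j _ => div_nonneg (hW i j) (hdW i).le)
    (fun j _ => mul_nonneg (hW i j) (div_nonneg (sq_nonneg (x j)) (hdW j).le))
    fun j _ => le_of_eq <| by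
      simp only [mul_pow, inv_pow, Real.sq_sqrt (hdW i).le, Real.sq_sqrt (hdW j).le]
      ring
  rw [hrow, one_mul] at hcs
  simpa only [mulVec, dotProduct, invSqrtDeg_mul_mul_invSqrtDeg_apply] using hcs

lemma l2_opNorm_invSqrtDeg_mul_mul_invSqrtDeg_le_one (hWsymm : W.IsSymm)
    (hW : ∀ i j, 0 ≤ W i j) (hdW : ∀ i, 0 < deg W i) :
    ‖invSqrtDeg W * W * invSqrtDeg W‖ ≤ 1 := by
  refine l2_opNorm_le_of_sum_sq_mulVec_le zero_le_one fun x => ?_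
  have hcol : ∀ j, ∑ i, W i j = deg W j := fun j =>
    Finset.sum_congr (s₁ := Finset.univ) rfl fun i _ => hWsymm.apply j i
  calc ∑ i, ((invSqrtDeg W * W * invSqrtDeg W) *ᵥ x) i ^ 2
      ≤ ∑ i, ∑ j, W i j * (x j ^ 2 / deg W j) :=
        Finset.sum_le_sum fun i _ => sq_invSqrtDeg_mul_mul_invSqrtDeg_mulVec_le hW hdW x i
    _ = ∑ j, (∑ i, W i j) * (x j ^ 2 / deg W j) := by
        rw [Finset.sum_comm]
        simp only [Finset.sum_mul]
    _ = 1 ^ 2 * ∑ j, x j ^ 2 := by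
        simp only [hcol, one_pow, one_mul]
        exact Finset.sum_congr rfl fun j _ => mul_div_cancel₀ _ (hdW j).ne'

end NormalizedAdjacency

section DegreeRatio

variable {d : ℕ} (W Wh : Matrix (Fin d) (Fin d) ℝ)

noncomputable def sqrtDegRatio : Matrix (Fin d) (Fin d) ℝ :=
  diagonal fun i => √(deg Wh i) / √(deg W i)

variable {W Wh}

lemma sqrtDegRatio_mul_invSqrtDeg (hdWh : ∀ i, 0 < deg Wh i) :
    sqrtDegRatio W Wh * invSqrtDeg Wh = invSqrtDeg W := by
  rw [sqrtDegRatio, invSqrtDeg, invSqrtDeg, diagonal_mul_diagonal]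
  congr 1
  funext i
  have : √(deg Wh i) ≠ 0 := (Real.sqrt_pos.2 (hdWh i)).ne'
  field_simp

lemma invSqrtDeg_mul_sqrtDegRatio (hdWh : ∀ i, 0 < deg Wh i) :
    invSqrtDeg Wh * sqrtDegRatio W Wh = invSqrtDeg W := by
  rw [← sqrtDegRatio_mul_invSqrtDeg (W := W) hdWh, sqrtDegRatio, invSqrtDeg]
  exact (commute_diagonal _ _).eq

lemma l2_opNorm_sqrtDegRatio_sub_one_le {m : ℝ} (hm : 0 ≤ m) (hdW : ∀ i, 0 < deg W i)
    (hdWh : ∀ i, 0 ≤ deg Wh i) (h : ∀ i, |deg Wh i - deg W i| / deg W i ≤ m) :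
    ‖sqrtDegRatio W Wh - 1‖ ≤ m := by
  rw [sqrtDegRatio, ← diagonal_one, diagonal_sub]
  exact l2_opNorm_diagonal_le hm fun i =>
    (abs_sqrt_div_sqrt_sub_one_le (hdW i) (hdWh i)).trans (h i)

lemma l2_opNorm_invSqrtDeg_le {δ : ℝ} (hδ : 0 < δ) (h : ∀ i, δ ≤ deg W i) :
    ‖invSqrtDeg W‖ ≤ (√δ)⁻¹ :=
  l2_opNorm_diagonal_le (by positivity) fun i => by
    rw [abs_of_nonneg (by positivity)]
    exact inv_anti₀ (Real.sqrt_pos.2 hδ) (Real.sqrt_le_sqrt (h i))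

end DegreeRatio

theorem stmt4_general {d : ℕ} (hd : 0 < d) (W Wh : Matrix (Fin d) (Fin d) ℝ)
    (hWhsymm : Wh.IsSymm) (hWh : ∀ i j, 0 ≤ Wh i j)
    (hdW : ∀ i, 0 < deg W i) (hdWh : ∀ i, 0 < deg Wh i) :
    opNorm (normLap Wh - normLap W) ≤
      ((⨆ i, |deg W i - deg Wh i|) / (⨅ i, deg W i)) *
        (2 + (⨆ i, |deg W i - deg Wh i|) / (⨅ i, deg W i)) +
      opNorm (Wh - W) / (⨅ i, deg W i) := by
  have : Nonempty (Fin d) := ⟨⟨0, hd⟩⟩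
  set δ := ⨅ i, deg W i
  set μ := ⨆ i, |deg W i - deg Wh i|
  have hδle : ∀ i, δ ≤ deg W i := fun i => ciInf_le (Set.finite_range _).bddBelow i
  have hδpos : 0 < δ := by
    obtain ⟨i, hi⟩ := exists_eq_ciInf_of_finite (f := deg W)
    exact (hdW i).trans_eq hi
  have hratio : ∀ i, |deg Wh i - deg W i| / deg W i ≤ μ / δ := fun i => by
    have hμ : |deg Wh i - deg W i| ≤ μ := by
      rw [abs_sub_comm]
      exact le_ciSup (f := fun i => |deg W i - deg Wh i|) (Set.finite_range _).bddAbove i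
    exact div_le_div₀ ((abs_nonneg _).trans hμ) hμ hδpos (hδle i)
  have hm : 0 ≤ μ / δ := (div_nonneg (abs_nonneg _) (hdW _).le).trans (hratio ⟨0, hd⟩)
  have key := norm_one_sub_sandwich_sub_le (W := W)
    (sqrtDegRatio_mul_invSqrtDeg hdWh) (invSqrtDeg_mul_sqrtDegRatio hdWh)
    (l2_opNorm_invSqrtDeg_le hδpos hδle)
    (l2_opNorm_invSqrtDeg_mul_mul_invSqrtDeg_le_one hWhsymm hWh hdWh)
    (l2_opNorm_sqrtDegRatio_sub_one_le hm hdW (fun i => (hdWh i).le) hratio)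
  rwa [inv_pow, Real.sq_sqrt hδpos.le, inv_mul_eq_div] at key

/-- Deterministic perturbation bound for normalized graph Laplacians:
with `m = maxᵢ |Dᵢ − D̂ᵢ| / minᵢ Dᵢ`, one has
`‖L̂ − L‖_op ≤ m(2 + m) + ‖Ŵ − W‖_op / minᵢ Dᵢ`. -/
theorem stmt4 {d : ℕ} (hd : 0 < d) (W Wh : Matrix (Fin d) (Fin d) ℝ)
    (hWsymm : W.IsSymm) (hWhsymm : Wh.IsSymm)
    (hW : ∀ i j, 0 ≤ W i j) (hWh : ∀ i j, 0 ≤ Wh i j)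
    (hdW : ∀ i, 0 < deg W i) (hdWh : ∀ i, 0 < deg Wh i) :
    opNorm (normLap Wh - normLap W) ≤
      ((⨆ i, |deg W i - deg Wh i|) / (⨅ i, deg W i)) *
        (2 + (⨆ i, |deg W i - deg Wh i|) / (⨅ i, deg W i)) +
      opNorm (Wh - W) / (⨅ i, deg W i) :=
  stmt4_general hd W Wh hWhsymm hWh hdW hdWh
end

section
/- Let Q, Q̂ ∈ ℝ^{d×k} be matrices with orthonormal columns (Qᵀ Q = I_k and Q̂ᵀ Q̂ = I_k). Then there exists an orthogonal matrix O ∈ ℝ^{k×k} such that ‖Q̂ − Q O‖_F² ≤ 2·(k − ‖Qᵀ Q̂‖_F²). -/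
open Matrix

noncomputable def frobSq {m n : ℕ} (M : Matrix (Fin m) (Fin n) ℝ) : ℝ :=
  ∑ i, ∑ j, (M i j) ^ 2

/-!
Put `A = Qᵀ Q̂`. Orthonormality of the columns gives `‖Q̂ - Q O‖_F² = 2 (k - tr (Aᵀ O))` for every
orthogonal `O`, and `1 - Aᵀ A = Q̂ᵀ (1 - Q Qᵀ) Q̂ ≥ 0`, so the singular values `σᵢ` of `A` lie in
`[0, 1]`. Taking for `O` the orthogonal factor of a singular value decomposition of `A` gives
`tr (Aᵀ O) = ∑ σᵢ ≥ ∑ σᵢ² = ‖A‖_F²`. The decomposition is obtained by diagonalising `Aᵀ A` with an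
orthogonal `U`, so that `A U` has orthogonal columns, and extending its normalised nonzero columns
to an orthonormal basis.
-/

namespace Matrix

variable {m n p : Type*} [Fintype m] [Fintype n] [Fintype p] [DecidableEq n]

theorem IsSymm.exists_mem_orthogonalGroup_isDiag {S : Matrix n n ℝ} (hS : S.IsSymm) :
    ∃ U ∈ orthogonalGroup n ℝ, (Uᵀ * S * U).IsDiag := by
  replace hS : S.IsHermitian := isHermitian_iff_isSymm.mpr hS
  refine ⟨hS.eigenvectorUnitary, hS.eigenvectorUnitary.2, ?_⟩
  have h := hS.conjStarAlgAut_star_eigenvectorUnitary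
  rw [Unitary.conjStarAlgAut_star_apply] at h
  rw [← conjTranspose_eq_transpose_of_trivial, ← star_eq_conjTranspose, h]
  exact isDiag_diagonal _

theorem HasOrthogonalCols.exists_mem_orthogonalGroup_eq_mul_diagonal {M : Matrix n n ℝ}
    (hM : M.HasOrthogonalCols) :
    ∃ W ∈ orthogonalGroup n ℝ, M = W * diagonal fun j ↦ √((Mᵀ * M) j j) := by
  set σ : n → ℝ := fun j ↦ √((Mᵀ * M) j j)
  have hσ : ∀ j, σ j * σ j = (Mᵀ * M) j j := fun j ↦
    Real.mul_self_sqrt <| (posSemidef_conjTranspose_mul_self M).diag_nonneg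
  set c : n → EuclideanSpace ℝ n := fun j ↦ WithLp.toLp 2 (fun i ↦ M i j)
  have hc : ∀ i j, inner ℝ (c i) (c j) = (Mᵀ * M) i j := by
    intro i j
    simp [c, PiLp.inner_apply, Matrix.mul_apply, mul_comm]
  set s : Set n := {j | σ j ≠ 0}
  have hw : Orthonormal ℝ (s.domRestrict fun j ↦ (σ j)⁻¹ • c j) := by
    rw [orthonormal_iff_ite]
    rintro ⟨i, hi : σ i ≠ 0⟩ ⟨j, -⟩
    simp only [Set.domRestrict_apply, real_inner_smul_left, real_inner_smul_right, hc,
      Subtype.mk.injEq]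
    split_ifs with hij
    · subst hij
      rw [← hσ]
      field_simp
    · simp [transpose_mul_self_isDiag_iff_hasOrthogonalCols.mpr hM hij]
  obtain ⟨b, hb⟩ := hw.exists_orthonormalBasis_extension_of_card_eq (by simp)
  refine ⟨(EuclideanSpace.basisFun n ℝ).toBasis.toMatrix b,
    (EuclideanSpace.basisFun n ℝ).toMatrix_orthonormalBasis_mem_orthogonal b, ?_⟩
  ext i j
  rw [mul_diagonal, Module.Basis.toMatrix_apply]
  by_cases hj : σ j = 0
  · have hcj : c j = 0 := inner_self_eq_zero.mp <| by rw [hc, ← hσ, hj, mul_zero]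
    simpa [hj] using congr($hcj i)
  · simp only [hb j hj, map_smul, Finsupp.coe_smul, Pi.smul_apply,
      OrthonormalBasis.coe_toBasis_repr_apply, EuclideanSpace.basisFun_repr, smul_eq_mul, c]
    field_simp

theorem exists_mem_orthogonalGroup_trace_transpose_mul_self_le {A : Matrix n n ℝ}
    (hA : (1 - Aᵀ * A).PosSemidef) :
    ∃ O ∈ orthogonalGroup n ℝ, trace (Aᵀ * A) ≤ trace (Aᵀ * O) := by
  obtain ⟨U, hU, hdiag⟩ := (isSymm_transpose_mul_self A).exists_mem_orthogonalGroup_isDiag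
  have hUU : U * Uᵀ = 1 := (mem_orthogonalGroup_iff n ℝ).mp hU
  have hMM : (A * U)ᵀ * (A * U) = Uᵀ * (Aᵀ * A) * U := by
    rw [transpose_mul, Matrix.mul_assoc, Matrix.mul_assoc, Matrix.mul_assoc]
  obtain ⟨W, hW, hAU⟩ := HasOrthogonalCols.exists_mem_orthogonalGroup_eq_mul_diagonal
    (M := A * U) (transpose_mul_self_isDiag_iff_hasOrthogonalCols.mp (hMM ▸ hdiag))
  set x : n → ℝ := fun j ↦ ((A * U)ᵀ * (A * U)) j j
  have hx : ∀ j, x j ≤ 1 := by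
    intro j
    have h := (hA.conjTranspose_mul_mul_same U).diag_nonneg (i := j)
    rwa [conjTranspose_eq_transpose_of_trivial, Matrix.mul_sub, Matrix.sub_mul, Matrix.mul_one,
      (mem_orthogonalGroup_iff' n ℝ).mp hU, ← hMM, sub_apply, one_apply_eq, sub_nonneg] at h
  refine ⟨W * Uᵀ, mul_mem hW (by simpa [star_eq_conjTranspose] using Unitary.star_mem hU), ?_⟩
  have hAA : trace (Aᵀ * A) = ∑ j, x j := calc
    trace (Aᵀ * A) = trace ((A * U)ᵀ * (A * U)) := by
      rw [hMM, trace_mul_comm _ U, ← Matrix.mul_assoc, hUU, Matrix.one_mul]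
    _ = ∑ j, x j := rfl
  have hAO : trace (Aᵀ * (W * Uᵀ)) = ∑ j, √(x j) := calc
    trace (Aᵀ * (W * Uᵀ)) = trace ((A * U)ᵀ * W) := by
      rw [← Matrix.mul_assoc, trace_mul_comm, transpose_mul, Matrix.mul_assoc]
    _ = trace (diagonal fun j ↦ √(x j)) := by
      rw [hAU, transpose_mul, Matrix.mul_assoc, (mem_orthogonalGroup_iff' n ℝ).mp hW,
        Matrix.mul_one, diagonal_transpose]
    _ = ∑ j, √(x j) := trace_diagonal _
  rw [hAA, hAO]
  gcongr with j
  exact Real.le_sqrt_self_iff.mpr (hx j)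

theorem posSemidef_one_sub_mul_transpose [DecidableEq m] {Q : Matrix m n ℝ} (hQ : Qᵀ * Q = 1) :
    (1 - Q * Qᵀ).PosSemidef := by
  have hsymm : (1 - Q * Qᵀ)ᴴ = 1 - Q * Qᵀ := by
    simp [conjTranspose_eq_transpose_of_trivial, transpose_sub]
  have hidem : (1 - Q * Qᵀ) * (1 - Q * Qᵀ) = 1 - Q * Qᵀ := by
    rw [Matrix.sub_mul, Matrix.one_mul, Matrix.mul_sub, Matrix.mul_one, Matrix.mul_assoc,
      ← Matrix.mul_assoc Qᵀ Q, hQ, Matrix.one_mul, sub_self, sub_zero]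
  have h := posSemidef_conjTranspose_mul_self (1 - Q * Qᵀ)
  rwa [hsymm, hidem] at h

theorem posSemidef_one_sub_transpose_mul_self_of_orthonormal [DecidableEq m] [DecidableEq p]
    {Q : Matrix m n ℝ} {P : Matrix m p ℝ} (hQ : Qᵀ * Q = 1) (hP : Pᵀ * P = 1) :
    (1 - (Qᵀ * P)ᵀ * (Qᵀ * P)).PosSemidef := by
  have h : Pᵀ * (1 - Q * Qᵀ) * P = 1 - (Qᵀ * P)ᵀ * (Qᵀ * P) := by
    rw [Matrix.mul_sub, Matrix.sub_mul, Matrix.mul_one, hP, transpose_mul, transpose_transpose,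
      Matrix.mul_assoc, Matrix.mul_assoc, Matrix.mul_assoc]
  simpa [h] using (posSemidef_one_sub_mul_transpose hQ).conjTranspose_mul_mul_same P

theorem trace_transpose_mul_self_sub_of_orthonormal {M N : Matrix m n ℝ} (hM : Mᵀ * M = 1)
    (hN : Nᵀ * N = 1) :
    trace ((M - N)ᵀ * (M - N)) = 2 * (Fintype.card n - trace (Mᵀ * N)) := by
  have hNM : trace (Nᵀ * M) = trace (Mᵀ * N) := by
    rw [← trace_transpose, transpose_mul, transpose_transpose]
  rw [transpose_sub, Matrix.sub_mul, Matrix.mul_sub, Matrix.mul_sub, hM, hN, trace_sub, trace_sub,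
    trace_sub, hNM, trace_one]
  ring

end Matrix

theorem frobSq_eq_trace {m n : ℕ} (M : Matrix (Fin m) (Fin n) ℝ) : frobSq M = trace (Mᵀ * M) := by
  rw [frobSq, Finset.sum_comm]
  simp [trace, Matrix.mul_apply, sq]

/-- For `Q, Q̂ ∈ ℝ^{d×k}` with orthonormal columns, there is an orthogonal `O ∈ ℝ^{k×k}` with
`‖Q̂ − QO‖_F² ≤ 2(k − ‖Qᵀ Q̂‖_F²)`. -/
theorem stmt7 {d k : ℕ} (Q Qh : Matrix (Fin d) (Fin k) ℝ)
    (hQ : Qᵀ * Q = 1) (hQh : Qhᵀ * Qh = 1) :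
    ∃ O : Matrix (Fin k) (Fin k) ℝ, Oᵀ * O = 1 ∧ O * Oᵀ = 1 ∧
      frobSq (Qh - Q * O) ≤ 2 * ((k : ℝ) - frobSq (Qᵀ * Qh)) := by
  obtain ⟨O, hO, hle⟩ := exists_mem_orthogonalGroup_trace_transpose_mul_self_le
    (posSemidef_one_sub_transpose_mul_self_of_orthonormal hQ hQh)
  have hOO : Oᵀ * O = 1 := (mem_orthogonalGroup_iff' _ _).mp hO
  have hQO : (Q * O)ᵀ * (Q * O) = 1 := by
    rw [transpose_mul, Matrix.mul_assoc, ← Matrix.mul_assoc Qᵀ, hQ, Matrix.one_mul, hOO]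
  have htr : trace ((Qᵀ * Qh)ᵀ * O) = trace (Qhᵀ * (Q * O)) := by
    rw [transpose_mul, transpose_transpose, Matrix.mul_assoc]
  refine ⟨O, hOO, (mem_orthogonalGroup_iff _ _).mp hO, ?_⟩
  rw [frobSq_eq_trace, frobSq_eq_trace, trace_transpose_mul_self_sub_of_orthonormal hQh hQO,
    Fintype.card_fin]
  linarith
end

section
/- Let u and v be nonzero vectors in a real inner product space. Then ‖ u/‖u‖ − v/‖v‖ ‖² ≤ 2·( |‖v‖ − ‖u‖|² + ‖u − v‖² ) / ‖v‖² ≤ 4·‖u − v‖² / ‖v‖². -/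
/-!
Write `‖u‖⁻¹ • u - ‖v‖⁻¹ • v = ‖v‖⁻¹ • (u - v) + (‖u‖⁻¹ - ‖v‖⁻¹) • u`; the second term has norm at most
`|‖v‖ - ‖u‖| / ‖v‖`, so the triangle inequality and `(a + b)² ≤ 2(a² + b²)` give the first bound,
and the reverse triangle inequality `|‖v‖ - ‖u‖| ≤ ‖u - v‖` the second.
-/

section Normalize

variable {E : Type*} [NormedAddCommGroup E] [NormedSpace ℝ E]

lemma norm_inv_norm_sub_inv_norm_smul_le (u : E) {v : E} (hv : v ≠ 0) :
    ‖(‖u‖⁻¹ - ‖v‖⁻¹) • u‖ ≤ |‖v‖ - ‖u‖| / ‖v‖ := by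
  rcases eq_or_ne u 0 with rfl | hu
  · simp only [smul_zero, norm_zero]
    positivity
  have hcoeff : (‖u‖⁻¹ - ‖v‖⁻¹) * ‖u‖ = (‖v‖ - ‖u‖) / ‖v‖ := by
    have hun : ‖u‖ ≠ 0 := norm_ne_zero_iff.mpr hu
    have hvn : ‖v‖ ≠ 0 := norm_ne_zero_iff.mpr hv
    field_simp
  refine le_of_eq ?_
  calc ‖(‖u‖⁻¹ - ‖v‖⁻¹) • u‖ = |(‖u‖⁻¹ - ‖v‖⁻¹) * ‖u‖| := by
        rw [norm_smul, Real.norm_eq_abs, abs_mul, abs_norm]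
    _ = |‖v‖ - ‖u‖| / ‖v‖ := by rw [hcoeff, abs_div, abs_norm]

lemma norm_inv_norm_smul_sub_inv_norm_smul_le (u : E) {v : E} (hv : v ≠ 0) :
    ‖‖u‖⁻¹ • u - ‖v‖⁻¹ • v‖ ≤ (‖u - v‖ + |‖v‖ - ‖u‖|) / ‖v‖ := by
  have hdecomp : ‖u‖⁻¹ • u - ‖v‖⁻¹ • v = ‖v‖⁻¹ • (u - v) + (‖u‖⁻¹ - ‖v‖⁻¹) • u := by
    rw [smul_sub, sub_smul]
    abel
  calc ‖‖u‖⁻¹ • u - ‖v‖⁻¹ • v‖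
      ≤ ‖‖v‖⁻¹ • (u - v)‖ + ‖(‖u‖⁻¹ - ‖v‖⁻¹) • u‖ := hdecomp ▸ norm_add_le _ _
    _ ≤ ‖u - v‖ / ‖v‖ + |‖v‖ - ‖u‖| / ‖v‖ := by
      gcongr
      · rw [norm_smul, norm_inv, norm_norm, inv_mul_eq_div]
      · exact norm_inv_norm_sub_inv_norm_smul_le u hv
    _ = (‖u - v‖ + |‖v‖ - ‖u‖|) / ‖v‖ := (add_div _ _ _).symm

end Normalize

theorem stmt10_general {E : Type*} [NormedAddCommGroup E] [InnerProductSpace ℝ E]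
    (u v : E) (hv : v ≠ 0) :
    ‖‖u‖⁻¹ • u - ‖v‖⁻¹ • v‖ ^ 2 ≤ 2 * (|‖v‖ - ‖u‖| ^ 2 + ‖u - v‖ ^ 2) / ‖v‖ ^ 2 ∧
    2 * (|‖v‖ - ‖u‖| ^ 2 + ‖u - v‖ ^ 2) / ‖v‖ ^ 2 ≤ 4 * ‖u - v‖ ^ 2 / ‖v‖ ^ 2 := by
  have hnorms : |‖v‖ - ‖u‖| ≤ ‖u - v‖ := abs_sub_comm ‖v‖ ‖u‖ ▸ abs_norm_sub_norm_le u v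
  constructor
  · calc ‖‖u‖⁻¹ • u - ‖v‖⁻¹ • v‖ ^ 2
        ≤ ((‖u - v‖ + |‖v‖ - ‖u‖|) / ‖v‖) ^ 2 := by
          gcongr
          exact norm_inv_norm_smul_sub_inv_norm_smul_le u hv
      _ ≤ 2 * (|‖v‖ - ‖u‖| ^ 2 + ‖u - v‖ ^ 2) / ‖v‖ ^ 2 := by
          rw [div_pow, add_comm ‖u - v‖]
          gcongr
          exact add_sq_le
  · gcongr ?_ / _
    linarith [pow_le_pow_left₀ (abs_nonneg _) hnorms 2]

/-- Row-normalization perturbation bound in a real inner product space: for nonzero `u, v`,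
`‖u/‖u‖ − v/‖v‖‖² ≤ 2(|‖v‖ − ‖u‖|² + ‖u − v‖²)/‖v‖² ≤ 4‖u − v‖²/‖v‖²`. -/
theorem stmt10 {E : Type*} [NormedAddCommGroup E] [InnerProductSpace ℝ E]
    (u v : E) (hu : u ≠ 0) (hv : v ≠ 0) :
    ‖‖u‖⁻¹ • u - ‖v‖⁻¹ • v‖ ^ 2 ≤ 2 * (|‖v‖ - ‖u‖| ^ 2 + ‖u - v‖ ^ 2) / ‖v‖ ^ 2 ∧
    2 * (|‖v‖ - ‖u‖| ^ 2 + ‖u - v‖ ^ 2) / ‖v‖ ^ 2 ≤ 4 * ‖u - v‖ ^ 2 / ‖v‖ ^ 2 :=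
  stmt10_general u v hv
end

section
/- Let 𝒰 ∈ ℝ^{d×k} be a matrix each of whose rows is a standard basis vector of ℝ^k (so that any two rows of 𝒰 are either equal or at Euclidean distance √2 from each other). Let C ∈ ℝ^{d×k} be arbitrary and define Σ = { i ∈ {1,…,d} : ‖C_{i,·} − 𝒰_{i,·}‖₂ ≥ 1/√2 }. Then for all indices i, j ∉ Σ with C_{i,·} = C_{j,·}, one has 𝒰_{i,·} = 𝒰_{j,·}. -/
/-!
Distinct rows of `U` are distinct standard basis vectors, hence at distance `√2 = 2 · (1/√2)`;
by the triangle inequality they cannot both lie within `1/√2` of a common row of `C`.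
-/

variable {𝕜 E ι : Type*} [RCLike 𝕜] [NormedAddCommGroup E] [InnerProductSpace 𝕜 E] {v : ι → E}

theorem Orthonormal.dist_eq_sqrt_two (hv : Orthonormal 𝕜 v) {i j : ι} (hij : i ≠ j) :
    dist (v i) (v j) = √2 := by
  have hsq : dist (v i) (v j) ^ 2 = 2 := by
    rw [dist_eq_norm, @norm_sub_sq 𝕜, hv.1 i, hv.1 j, hv.2 hij]
    norm_num
  rw [← hsq, Real.sqrt_sq dist_nonneg]

theorem Orthonormal.eq_of_dist_lt_inv_sqrt_two (hv : Orthonormal 𝕜 v) {i j : ι} {z : E}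
    (hi : dist (v i) z < 1 / √2) (hj : dist (v j) z < 1 / √2) : i = j := by
  by_contra hij
  have hsum : 1 / √2 + 1 / √2 = √2 := by
    field_simp
    norm_num
  have := (hv.dist_eq_sqrt_two hij).symm.le.trans (dist_triangle_right _ _ z)
  linarith

theorem EuclideanSpace.toLp_eq_single_of_eq_ite {n : Type*} [Fintype n] [DecidableEq n]
    {x : n → 𝕜} {l : n} (hx : ∀ m, x m = if m = l then 1 else 0) :
    WithLp.toLp 2 x = EuclideanSpace.single l 1 := by
  ext m
  rw [PiLp.toLp_apply, hx, PiLp.single_apply]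

theorem EuclideanSpace.sqrt_sum_sub_sq_eq_dist {n : Type*} [Fintype n] (x y : n → ℝ) :
    √(∑ m, (x m - y m) ^ 2) = dist (WithLp.toLp 2 x) (WithLp.toLp 2 y) := by
  simp only [EuclideanSpace.dist_eq, Real.dist_eq, sq_abs]

/-- Correctly clustered points: if every row of `𝒰` is a standard basis vector of `ℝ^k`,
`C` is arbitrary, and `Σ = {i : ‖Cᵢ − 𝒰ᵢ‖₂ ≥ 1/√2}`, then any two indices outside `Σ`
with equal rows of `C` have equal rows of `𝒰`. -/
theorem stmt13 {d k : ℕ} (U C : Matrix (Fin d) (Fin k) ℝ)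
    (hU : ∀ i, ∃ l : Fin k, ∀ j, U i j = if j = l then 1 else 0) :
    ∀ i j : Fin d,
      i ∉ {i : Fin d | 1 / Real.sqrt 2 ≤ Real.sqrt (∑ m, (C i m - U i m) ^ 2)} →
      j ∉ {i : Fin d | 1 / Real.sqrt 2 ≤ Real.sqrt (∑ m, (C i m - U i m) ^ 2)} →
      (∀ m, C i m = C j m) → (∀ m, U i m = U j m) := by
  intro i j hi hj hC
  simp only [Set.mem_ofPred_eq, not_le, EuclideanSpace.sqrt_sum_sub_sq_eq_dist, dist_comm] at hi hj
  obtain ⟨li, hli⟩ := hU i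
  obtain ⟨lj, hlj⟩ := hU j
  rw [EuclideanSpace.toLp_eq_single_of_eq_ite hli] at hi
  rw [EuclideanSpace.toLp_eq_single_of_eq_ite hlj, ← funext hC] at hj
  have hl : li = lj :=
    (EuclideanSpace.orthonormal_single (𝕜 := ℝ)).eq_of_dist_lt_inv_sqrt_two
      (v := fun l => EuclideanSpace.single l 1) hi hj
  intro m
  rw [hli, hlj, hl]
end

section
/- Let 𝒰̂ ∈ ℝ^{d×k}, let 𝒰 ∈ ℝ^{d×k} be a matrix with at most k distinct rows, and let C* be a minimizer of C ↦ ‖𝒰̂ − C‖_F² over the set ℳ(d,k) of all matrices in ℝ^{d×k} having at most k distinct rows. Then the number of indices i ∈ {1,…,d} with ‖C*_{i,·} − 𝒰_{i,·}‖₂ ≥ 1/√2 is at most 8·‖𝒰̂ − 𝒰‖_F². -/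
open Matrix

/-- `M ∈ ℳ(d,k)`: the matrix `M ∈ ℝ^{d×k}` has at most `k` distinct rows. -/
def hasAtMostKDistinctRows {d k : ℕ} (M : Matrix (Fin d) (Fin k) ℝ) : Prop :=
  ∃ (c : Fin d → Fin k) (r : Fin k → Fin k → ℝ), ∀ i j, M i j = r (c i) j

/-! Since `𝒰` is feasible, `‖𝒰̂ - C*‖_F ≤ ‖𝒰̂ - 𝒰‖_F`, so the triangle inequality gives
`‖C* - 𝒰‖_F² ≤ 4‖𝒰̂ - 𝒰‖_F²`. Each row counted contributes at least `1/2` to `‖C* - 𝒰‖_F²`,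
so there are at most `8‖𝒰̂ - 𝒰‖_F²` of them. -/

open Finset

attribute [local instance] Matrix.frobeniusNormedAddCommGroup

theorem frobSq_eq_norm_sq {m n : ℕ} (M : Matrix (Fin m) (Fin n) ℝ) : frobSq M = ‖M‖ ^ 2 := by
  rw [frobenius_norm_def, ← Real.rpow_natCast, ← Real.rpow_mul (by positivity)]
  norm_num [frobSq]

theorem norm_sub_le_two_mul_of_norm_sub_le {E : Type*} [SeminormedAddCommGroup E] {a c u : E}
    (h : ‖a - c‖ ≤ ‖a - u‖) : ‖c - u‖ ≤ 2 * ‖a - u‖ :=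
  calc ‖c - u‖ ≤ ‖c - a‖ + ‖a - u‖ := norm_sub_le_norm_sub_add_norm_sub _ _ _
    _ = ‖a - c‖ + ‖a - u‖ := by rw [norm_sub_rev]
    _ ≤ 2 * ‖a - u‖ := by linarith

theorem frobSq_sub_le_four_mul_of_frobSq_le {m n : ℕ} {A C U : Matrix (Fin m) (Fin n) ℝ}
    (h : frobSq (A - C) ≤ frobSq (A - U)) : frobSq (C - U) ≤ 4 * frobSq (A - U) := by
  rw [frobSq_eq_norm_sq, frobSq_eq_norm_sq] at h ⊢
  have hnorm := norm_sub_le_two_mul_of_norm_sub_le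
    ((pow_le_pow_iff_left₀ (norm_nonneg _) (norm_nonneg _) two_ne_zero).1 h)
  calc ‖C - U‖ ^ 2 ≤ (2 * ‖A - U‖) ^ 2 := pow_le_pow_left₀ (norm_nonneg _) hnorm 2
    _ = 4 * ‖A - U‖ ^ 2 := by ring

theorem Finset.card_filter_mul_le_sum {ι : Type*} (s : Finset ι) {f : ι → ℝ}
    (hf : ∀ i ∈ s, 0 ≤ f i) (t : ℝ) : #{i ∈ s | t ≤ f i} * t ≤ ∑ i ∈ s, f i :=
  calc (#{i ∈ s | t ≤ f i} : ℝ) * t = ∑ i ∈ s with t ≤ f i, t := by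
        rw [sum_const, nsmul_eq_mul]
    _ ≤ ∑ i ∈ s with t ≤ f i, f i := sum_le_sum fun i hi => (mem_filter.1 hi).2
    _ ≤ ∑ i ∈ s, f i := sum_le_sum_of_subset_of_nonneg (filter_subset _ _) fun i hi _ => hf i hi

theorem one_div_sqrt_two_le_sqrt_iff {x : ℝ} (hx : 0 ≤ x) : 1 / √2 ≤ √x ↔ 1 / 2 ≤ x := by
  rw [one_div, ← Real.sqrt_inv, Real.sqrt_le_sqrt_iff hx, one_div]

theorem stmt14_general {d k : ℕ} (Uhat U Cstar : Matrix (Fin d) (Fin k) ℝ)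
    (hU : hasAtMostKDistinctRows U)
    (hCmin : ∀ C : Matrix (Fin d) (Fin k) ℝ, hasAtMostKDistinctRows C →
      frobSq (Uhat - Cstar) ≤ frobSq (Uhat - C)) :
    (({i : Fin d | 1 / Real.sqrt 2 ≤
        Real.sqrt (∑ m, (Cstar i m - U i m) ^ 2)}.ncard : ℝ))
      ≤ 8 * frobSq (Uhat - U) := by
  have hrows : {i : Fin d | 1 / Real.sqrt 2 ≤ Real.sqrt (∑ m, (Cstar i m - U i m) ^ 2)} =
      ↑({i | 1 / 2 ≤ ∑ m, (Cstar i m - U i m) ^ 2} : Finset (Fin d)) := by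
    ext i
    simp only [Set.mem_ofPred_eq, coe_filter, mem_univ, true_and]
    exact one_div_sqrt_two_le_sqrt_iff (by positivity)
  have hcount := card_filter_mul_le_sum (f := fun i => ∑ m, (Cstar i m - U i m) ^ 2) univ
    (fun _ _ => by positivity) (1 / 2)
  have hclose : frobSq (Cstar - U) ≤ 4 * frobSq (Uhat - U) :=
    frobSq_sub_le_four_mul_of_frobSq_le (hCmin U hU)
  rw [hrows, Set.ncard_coe_finset]
  change _ ≤ frobSq (Cstar - U) at hcount
  linarith

/-- Counting bound for the k-means step: if `𝒰` has at most `k` distinct rows and `C*`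
minimizes `C ↦ ‖𝒰̂ − C‖_F²` over `ℳ(d,k)`, then the number of indices with
`‖C*ᵢ − 𝒰ᵢ‖₂ ≥ 1/√2` is at most `8‖𝒰̂ − 𝒰‖_F²`. -/
theorem stmt14 {d k : ℕ} (Uhat U Cstar : Matrix (Fin d) (Fin k) ℝ)
    (hU : hasAtMostKDistinctRows U)
    (hCmem : hasAtMostKDistinctRows Cstar)
    (hCmin : ∀ C : Matrix (Fin d) (Fin k) ℝ, hasAtMostKDistinctRows C →
      frobSq (Uhat - Cstar) ≤ frobSq (Uhat - C)) :
    (({i : Fin d | 1 / Real.sqrt 2 ≤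
        Real.sqrt (∑ m, (Cstar i m - U i m) ^ 2)}.ncard : ℝ))
      ≤ 8 * frobSq (Uhat - U) :=
  stmt14_general Uhat U Cstar hU hCmin
end
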